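/- Let (f^t, g^t, λ^t) be the iterates of PAM. For every t ≥ 0: (a) F(f^{t+1}, g^t, λ^t) ≥ F(f^t, g^t, λ^t); (b) F(f^{t+1}, g^{t+1}, λ^t) − F(f^{t+1}, g^t, λ^t) = η·KL(b ‖ c^t) ≥ (η/2)‖c^t − b‖_1², where KL denotes the Kullback–Leibler divergence; (c) F(f^{t+1}, g^{t+1}, λ^{t+1}) − F(f^{t+1}, g^{t+1}, λ^t) ≥ (c_∞²/(2η))‖λ^{t+1} − λ^t‖_2². -/

import Mathlib

open scoped BigOperators

noncomputable section

namespace EOT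

/-- Square matrices as functions. -/
abbrev Mat (n : ℕ) := Fin n → Fin n → ℝ

/-- Frobenius inner product ⟨A, B⟩ = Σ_{i,j} A_{ij} B_{ij}. -/
def frob {n : ℕ} (A B : Mat n) : ℝ := ∑ i, ∑ j, A i j * B i j

/-- Row-sum vector r(A) = A 𝟙. -/
def rowSum {n : ℕ} (A : Mat n) : Fin n → ℝ := fun i => ∑ j, A i j

/-- Column-sum vector c(A) = Aᵀ 𝟙. -/
def colSum {n : ℕ} (A : Mat n) : Fin n → ℝ := fun j => ∑ i, A i j

/-- Entrywise ℓ₁ norm of a matrix. -/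
def mnorm1 {n : ℕ} (A : Mat n) : ℝ := ∑ i, ∑ j, |A i j|

/-- ℓ₁ norm of a vector. -/
def vnorm1 {m : ℕ} (v : Fin m → ℝ) : ℝ := ∑ i, |v i|

/-- Euclidean (ℓ₂) norm of a vector. -/
def vnorm2 {m : ℕ} (v : Fin m → ℝ) : ℝ := Real.sqrt (∑ i, v i ^ 2)

/-- c_∞ := max_{k,i,j} |C^k_{ij}|. -/
def cinf {n N : ℕ} (C : Fin N → Mat n) : ℝ := ⨆ k, ⨆ i, ⨆ j, |C k i j|

/-- ι := min_j log b_j. -/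
def iotaMin {n : ℕ} (b : Fin n → ℝ) : ℝ := ⨅ j, Real.log (b j)

/-- ζ^k(f,g,λ)_{ij} = exp((f_i + g_j − λ_k C^k_{ij})/η). -/
def zeta {n N : ℕ} (η : ℝ) (C : Fin N → Mat n) (f g : Fin n → ℝ)
    (lam : Fin N → ℝ) (k : Fin N) : Mat n :=
  fun i j => Real.exp ((f i + g j - lam k * C k i j) / η)

/-- π^k(f,g,λ) = ζ^k(f,g,λ) / Σ_{k'} ‖ζ^{k'}(f,g,λ)‖₁. -/
def piMat {n N : ℕ} (η : ℝ) (C : Fin N → Mat n) (f g : Fin n → ℝ)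
    (lam : Fin N → ℝ) (k : Fin N) : Mat n :=
  fun i j => zeta η C f g lam k i j / ∑ k', mnorm1 (zeta η C f g lam k')

/-- The dual objective F(f,g,λ) = ⟨f,a⟩ + ⟨g,b⟩ − η log(Σ_k ‖ζ^k‖₁) − η. -/
def Fdual {n N : ℕ} (η : ℝ) (C : Fin N → Mat n) (a b : Fin n → ℝ)
    (f g : Fin n → ℝ) (lam : Fin N → ℝ) : ℝ :=
  (∑ i, f i * a i) + (∑ j, g j * b j)
    - η * Real.log (∑ k, mnorm1 (zeta η C f g lam k)) - η

/-- Gradient of F with respect to λ: (∇_λ F)_k = ⟨π^k(f,g,λ), C^k⟩. -/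
def gradLam {n N : ℕ} (η : ℝ) (C : Fin N → Mat n) (f g : Fin n → ℝ)
    (lam : Fin N → ℝ) : Fin N → ℝ :=
  fun k => frob (piMat η C f g lam k) (C k)

/-- `p` is the Euclidean projection of `x` onto the probability simplex. -/
def IsProjSimplex {m : ℕ} (p x : Fin m → ℝ) : Prop :=
  p ∈ stdSimplex ℝ (Fin m) ∧
    ∀ q ∈ stdSimplex ℝ (Fin m),
      vnorm2 (fun k => p k - x k) ≤ vnorm2 (fun k => q k - x k)

/-- Kullback–Leibler divergence KL(v‖w) = Σ_j v_j log(v_j / w_j). -/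
def klVec {m : ℕ} (v w : Fin m → ℝ) : ℝ := ∑ j, v j * Real.log (v j / w j)

/-- The Hamiltonian E(f,g,λ¹,λ²) = F(f,g,λ¹) − (1/(2τ))‖λ¹ − λ²‖₂². -/
def ham {n N : ℕ} (η : ℝ) (C : Fin N → Mat n) (a b : Fin n → ℝ) (τ : ℝ)
    (f g : Fin n → ℝ) (l1 l2 : Fin N → ℝ) : ℝ :=
  Fdual η C a b f g l1 - 1 / (2 * τ) * vnorm2 (fun k => l1 k - l2 k) ^ 2

/-- The rounding procedure Round(A, a, b). -/
def roundMat {n : ℕ} (A : Mat n) (a b : Fin n → ℝ) : Mat n :=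
  let x : Fin n → ℝ := fun i => min (a i / rowSum A i) 1
  let A' : Mat n := fun i j => x i * A i j
  let y : Fin n → ℝ := fun j => min (b j / colSum A' j) 1
  let A'' : Mat n := fun i j => A' i j * y j
  let erra : Fin n → ℝ := fun i => a i - rowSum A'' i
  let errb : Fin n → ℝ := fun j => b j - colSum A'' j
  fun i j => A'' i j + if vnorm1 erra = 0 then 0 else erra i * errb j / vnorm1 erra

/-- The coupling decomposition set Π_{a,b}^N. -/
def coupling {n N : ℕ} (a b : Fin n → ℝ) : Set (Fin N → Mat n) :=
  {P | (∀ k i j, 0 ≤ P k i j) ∧ rowSum (∑ k, P k) = a ∧ colSum (∑ k, P k) = b}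

/-- ℓ(π, λ) = Σ_k λ_k ⟨π^k, C^k⟩. -/
def ell {n N : ℕ} (C : Fin N → Mat n) (P : Fin N → Mat n) (lam : Fin N → ℝ) : ℝ :=
  ∑ k, lam k * frob (P k) (C k)

/-- (P, λ) is an ε-optimal solution of the EOT problem (duality-gap ≤ ε). -/
def epsOptimal {n N : ℕ} (C : Fin N → Mat n) (a b : Fin n → ℝ)
    (P : Fin N → Mat n) (lam : Fin N → ℝ) (ε : ℝ) : Prop :=
  P ∈ coupling (N := N) a b ∧ lam ∈ stdSimplex ℝ (Fin N) ∧
    ∀ μ ∈ stdSimplex ℝ (Fin N), ∀ Q ∈ coupling (N := N) a b,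
      ell C P μ - ell C Q lam ≤ ε

/-- The defining properties of the Margins procedure output (a^k, b^k). -/
def MarginsProp {n N : ℕ} (P : Fin N → Mat n) (b : Fin n → ℝ)
    (ak bk : Fin N → Fin n → ℝ) : Prop :=
  (∀ k, ak k = rowSum (P k)) ∧
  (∀ k j, 0 ≤ bk k j) ∧
  (∀ j, ∑ k, bk k j = b j) ∧
  (∀ k, ∑ j, bk k j = ∑ i, ak k i) ∧
  (∀ j k k', 0 ≤ (bk k j - colSum (P k) j) * (bk k' j - colSum (P k') j))

/-!
Shifting `g` by `η w` multiplies the `j`-th column of every `ζ^k` by `exp w_j`; for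
`w = log (b / c(Σ_k ζ^k))` the total mass becomes one and `F` increases by exactly `η KL(b ‖ c(π))`,
which Pinsker's inequality bounds below (Pinsker follows from the Padé bound
`log r ≤ (r - 1)(r + 5) / (4r + 2)` and Titu's lemma). Transposing the costs turns the `f`-update
into a `g`-update, so it gains `η KL(a ‖ r(π)) ≥ 0`. In `λ`, `F` is `-η` times a log-partition
function of the Gibbs weights `π`, and a change `δ` of `λ` moves every exponent by at most
`c_∞ ‖δ‖₂ / η`; Hoeffding's lemma turns this into a quadratic lower model with curvature `c_∞² / η`,
while the variational inequality of the Euclidean projection gives `⟨∇_λ F, δ⟩ ≥ ‖δ‖₂² / τ`, twice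
the curvature term.
-/

open Real

lemma log_le_pade {r : ℝ} (hr : 0 < r) : log r ≤ (r - 1) * (r + 5) / (4 * r + 2) := by
  set h : ℝ → ℝ := fun x => (x - 1) * (x + 5) / (4 * x + 2) - log x
  have hderiv : ∀ x, 0 < x → HasDerivAt h (4 * (x - 1) ^ 3 / (x * (4 * x + 2) ^ 2)) x := by
    intro x hx
    have hnum : HasDerivAt (fun y => (y - 1) * (y + 5)) ((x + 5) + (x - 1)) x := by
      simpa using ((hasDerivAt_id' x).sub_const 1).fun_mul ((hasDerivAt_id' x).add_const 5)
    have hden : HasDerivAt (fun y => 4 * y + 2) 4 x := by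
      simpa using ((hasDerivAt_id x).const_mul 4).add_const 2
    refine ((hnum.fun_div hden (by positivity)).fun_sub (hasDerivAt_log hx.ne')).congr_deriv ?_
    field_simp
    ring
  have hmin : IsMinOn h (Set.Ioi 0) 1 := by
    refine isMinOn_Ioi_of_deriv (hderiv 1 one_pos).continuousAt
      (fun x hx => (hderiv x hx.1).differentiableAt.differentiableWithinAt)
      (fun x hx => (hderiv x (one_pos.trans hx)).differentiableAt.differentiableWithinAt)
      (fun x hx => ?_) (fun x hx => ?_)
    · obtain ⟨hx0, hx1⟩ := hx
      rw [(hderiv x hx0).deriv]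
      have : (x - 1) ^ 3 ≤ 0 := Odd.pow_nonpos (by decide) (by linarith)
      exact div_nonpos_of_nonpos_of_nonneg (by linarith) (by positivity)
    · have hx0 : 0 < x := one_pos.trans hx
      rw [(hderiv x hx0).deriv]
      have : 0 ≤ (x - 1) ^ 3 := pow_nonneg (sub_nonneg.2 (le_of_lt hx)) 3
      exact div_nonneg (by linarith) (by positivity)
  simpa [h] using hmin (Set.mem_Ioi.2 hr)

lemma sq_sub_div_le_mul_log_div_sub_add {x y : ℝ} (hx : 0 < x) (hy : 0 < y) :
    3 * (x - y) ^ 2 / (2 * (x + 2 * y)) ≤ x * log (x / y) - x + y := by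
  have hpade := mul_le_mul_of_nonneg_left (log_le_pade (div_pos hy hx)) hx.le
  have hrhs : x * ((y / x - 1) * (y / x + 5) / (4 * (y / x) + 2))
      = (y - x) * (y + 5 * x) / (4 * y + 2 * x) := by
    field_simp
  have hlhs : 3 * (x - y) ^ 2 / (2 * (x + 2 * y))
      = y - x - (y - x) * (y + 5 * x) / (4 * y + 2 * x) := by
    field_simp
    ring
  have hlog : log (x / y) = -log (y / x) := by rw [← log_inv, inv_div]
  rw [hlhs, hlog]
  linarith

lemma sq_vnorm1_sub_le_two_mul_klVec {m : ℕ} {u v : Fin m → ℝ} (hu : ∀ j, 0 < u j)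
    (hv : ∀ j, 0 < v j) (hu1 : ∑ j, u j = 1) (hv1 : ∑ j, v j = 1) :
    vnorm1 (fun j => v j - u j) ^ 2 ≤ 2 * klVec u v := by
  have hw : ∀ j ∈ Finset.univ, 0 < u j + 2 * v j := fun j _ => by linarith [hu j, hv j]
  have hw3 : ∑ j, (u j + 2 * v j) = 3 := by
    rw [Finset.sum_add_distrib, ← Finset.mul_sum, hu1, hv1]
    norm_num
  have titu := Finset.sq_sum_div_le_sum_sq_div Finset.univ (fun j => |v j - u j|) hw
  simp only [sq_abs, hw3] at titu
  have hpointwise : ∑ j, 3 * (u j - v j) ^ 2 / (2 * (u j + 2 * v j))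
      ≤ ∑ j, (u j * log (u j / v j) - u j + v j) :=
    Finset.sum_le_sum fun j _ => sq_sub_div_le_mul_log_div_sub_add (hu j) (hv j)
  have hlhs : ∑ j, 3 * (u j - v j) ^ 2 / (2 * (u j + 2 * v j))
      = 3 / 2 * ∑ j, (v j - u j) ^ 2 / (u j + 2 * v j) := by
    rw [Finset.mul_sum]
    exact Finset.sum_congr rfl fun j _ => by rw [mul_comm 2, ← div_div]; ring
  have hrhs : ∑ j, (u j * log (u j / v j) - u j + v j) = klVec u v := by
    rw [Finset.sum_add_distrib, Finset.sum_sub_distrib, hu1, hv1, klVec]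
    ring
  unfold vnorm1
  linarith

lemma klVec_nonneg {m : ℕ} {u v : Fin m → ℝ} (hu : ∀ j, 0 < u j) (hv : ∀ j, 0 < v j)
    (hu1 : ∑ j, u j = 1) (hv1 : ∑ j, v j = 1) : 0 ≤ klVec u v := by
  linarith [sq_vnorm1_sub_le_two_mul_klVec hu hv hu1 hv1, sq_nonneg (vnorm1 fun j => v j - u j)]

lemma klVec_div_const {m : ℕ} {u c : Fin m → ℝ} {s : ℝ} (hu : ∀ j, 0 < u j)
    (hu1 : ∑ j, u j = 1) (hc : ∀ j, 0 < c j) (hs : 0 < s) :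
    klVec u (fun j => c j / s) = klVec u c + log s := by
  unfold klVec
  rw [← mul_one (log s), ← hu1, Finset.mul_sum, ← Finset.sum_add_distrib]
  refine Finset.sum_congr rfl fun j _ => ?_
  rw [div_div_eq_mul_div, mul_div_right_comm, log_mul (div_pos (hu j) (hc j)).ne' hs.ne']
  ring

open MeasureTheory ProbabilityTheory in
lemma log_sum_mul_exp_le_of_mem_Icc {M : Type*} [Fintype M] {p X : M → ℝ}
    (hp : ∀ m, 0 ≤ p m) (hp1 : ∑ m, p m = 1) {a b : ℝ} (hX : ∀ m, X m ∈ Set.Icc a b) :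
    log (∑ m, p m * exp (X m)) ≤ ∑ m, p m * X m + (b - a) ^ 2 / 8 := by
  let _ : MeasurableSpace M := ⊤
  have hμ : ∑ m, ENNReal.ofReal (p m) = 1 := by
    rw [← ENNReal.ofReal_sum_of_nonneg fun m _ => hp m, hp1, ENNReal.ofReal_one]
  set μ := (PMF.ofFintype _ hμ).toMeasure
  have hint : ∀ Y : M → ℝ, ∫ m, Y m ∂μ = ∑ m, p m * Y m := fun Y => by
    simp [μ, PMF.integral_eq_sum, ENNReal.toReal_ofReal (hp _)]
  have hmgf := (hasSubgaussianMGF_of_mem_Icc (μ := μ) Measurable.of_discrete.aemeasurable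
    (ae_of_all _ hX)).mgf_le 1
  simp only [mgf, hint, one_mul, one_pow, mul_one, NNReal.coe_pow, NNReal.coe_div, coe_nnnorm,
    Real.norm_eq_abs, NNReal.coe_ofNat] at hmgf
  set E := ∑ m, p m * X m
  have hsplit : ∑ m, p m * exp (X m) = exp E * ∑ m, p m * exp (X m - E) := by
    rw [Finset.mul_sum]
    exact Finset.sum_congr rfl fun m _ => by rw [exp_sub]; field_simp
  obtain ⟨m₀, -, hm₀⟩ := Finset.exists_lt_of_sum_lt (s := Finset.univ) (f := 0) (g := p)
    (by simp [hp1])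
  have hpos : 0 < ∑ m, p m * exp (X m) :=
    Finset.sum_pos' (fun m _ => mul_nonneg (hp m) (exp_pos _).le)
      ⟨m₀, Finset.mem_univ _, mul_pos hm₀ (exp_pos _)⟩
  rw [log_le_iff_le_exp hpos, hsplit, exp_add]
  refine mul_le_mul_of_nonneg_left (hmgf.trans_eq ?_) (exp_pos E).le
  rw [div_pow, sq_abs]
  ring_nf

lemma vnorm2_eq_norm {m : ℕ} (v : Fin m → ℝ) : vnorm2 v = ‖WithLp.toLp 2 v‖ := by
  simp [vnorm2, EuclideanSpace.norm_eq]

lemma IsProjSimplex.sum_mul_le_zero {m : ℕ} {p x q : Fin m → ℝ} (h : IsProjSimplex p x)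
    (hq : q ∈ stdSimplex ℝ (Fin m)) : ∑ k, (x k - p k) * (q k - p k) ≤ 0 := by
  set K : Set (EuclideanSpace ℝ (Fin m)) := WithLp.toLp 2 '' stdSimplex ℝ (Fin m)
  have hK : Convex ℝ K := (convex_stdSimplex ℝ (Fin m)).linear_image
    (WithLp.linearEquiv 2 ℝ (Fin m → ℝ)).symm.toLinearMap
  have hmin : ‖WithLp.toLp 2 x - WithLp.toLp 2 p‖ = ⨅ w : K, ‖WithLp.toLp 2 x - w‖ := by
    have hle : ∀ q ∈ stdSimplex ℝ (Fin m),
        ‖WithLp.toLp 2 x - WithLp.toLp 2 p‖ ≤ ‖WithLp.toLp 2 x - WithLp.toLp 2 q‖ := by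
      intro q hq
      rw [norm_sub_rev, norm_sub_rev (WithLp.toLp 2 x), ← WithLp.toLp_sub, ← WithLp.toLp_sub,
        ← vnorm2_eq_norm, ← vnorm2_eq_norm]
      exact h.2 q hq
    have : Nonempty K := ⟨⟨_, p, h.1, rfl⟩⟩
    refine le_antisymm (le_ciInf fun ⟨_, q, hq, hw⟩ => hw ▸ hle q hq) ?_
    exact ciInf_le ⟨0, by rintro _ ⟨w, rfl⟩; positivity⟩ (⟨_, p, h.1, rfl⟩ : K)
  have := (norm_eq_iInf_iff_real_inner_le_zero hK ⟨p, h.1, rfl⟩).1 hmin _ ⟨q, hq, rfl⟩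
  simpa [PiLp.inner_apply, mul_comm] using this

lemma IsProjSimplex.sum_sq_sub_le {m : ℕ} {l l' d : Fin m → ℝ} {τ : ℝ}
    (h : IsProjSimplex l' (fun k => l k + τ * d k)) (hl : l ∈ stdSimplex ℝ (Fin m)) :
    ∑ k, (l' k - l k) ^ 2 ≤ τ * ∑ k, d k * (l' k - l k) := by
  have hvi := h.sum_mul_le_zero hl
  have hexpand : ∑ k, (l k + τ * d k - l' k) * (l k - l' k)
      = ∑ k, (l' k - l k) ^ 2 - τ * ∑ k, d k * (l' k - l k) := by
    rw [Finset.mul_sum, ← Finset.sum_sub_distrib]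
    exact Finset.sum_congr rfl fun k _ => by ring
  linarith

lemma abs_le_cinf {n N : ℕ} (C : Fin N → Mat n) (k : Fin N) (i j : Fin n) :
    |C k i j| ≤ cinf C :=
  le_ciSup_of_le (Finite.bddAbove_range _) k <|
    le_ciSup_of_le (Finite.bddAbove_range _) i <|
      le_ciSup (f := fun j => |C k i j|) (Finite.bddAbove_range _) j

/-- Transposing every cost matrix exchanges the roles of `f` and `g` in `F`. -/
def transposeCosts {n N : ℕ} (C : Fin N → Mat n) : Fin N → Mat n := fun k i j => C k j i

section Gibbs

variable {n N : ℕ} {η : ℝ} {C : Fin N → Mat n}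

lemma zeta_pos (f g : Fin n → ℝ) (lam : Fin N → ℝ) (k : Fin N) (i j : Fin n) :
    0 < zeta η C f g lam k i j :=
  exp_pos _

lemma mnorm1_zeta (f g : Fin n → ℝ) (lam : Fin N → ℝ) (k : Fin N) :
    mnorm1 (zeta η C f g lam k) = ∑ i, ∑ j, zeta η C f g lam k i j :=
  Finset.sum_congr rfl fun i _ => Finset.sum_congr rfl fun j _ =>
    abs_of_pos (zeta_pos f g lam k i j)

lemma sum_mnorm1_zeta_eq_sum_colSum (f g : Fin n → ℝ) (lam : Fin N → ℝ) :
    ∑ k, mnorm1 (zeta η C f g lam k) = ∑ j, colSum (∑ k, zeta η C f g lam k) j := by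
  simp only [mnorm1_zeta, colSum, Finset.sum_apply]
  rw [Finset.sum_comm]
  exact (Finset.sum_congr rfl fun i _ => Finset.sum_comm).trans Finset.sum_comm

lemma colSum_sum_zeta_pos (hN : 0 < N) (f g : Fin n → ℝ) (lam : Fin N → ℝ) (j : Fin n) :
    0 < colSum (∑ k, zeta η C f g lam k) j := by
  have : Nonempty (Fin N) := ⟨⟨0, hN⟩⟩
  have : Nonempty (Fin n) := ⟨j⟩
  simp only [colSum, Finset.sum_apply, zeta]
  positivity

lemma sum_mnorm1_zeta_pos (hn : 0 < n) (hN : 0 < N) (f g : Fin n → ℝ) (lam : Fin N → ℝ) :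
    0 < ∑ k, mnorm1 (zeta η C f g lam k) := by
  have : Nonempty (Fin n) := ⟨⟨0, hn⟩⟩
  rw [sum_mnorm1_zeta_eq_sum_colSum]
  exact Finset.sum_pos (fun j _ => colSum_sum_zeta_pos hN f g lam j) Finset.univ_nonempty

lemma colSum_sum_piMat (f g : Fin n → ℝ) (lam : Fin N → ℝ) :
    colSum (∑ k, piMat η C f g lam k)
      = fun j => colSum (∑ k, zeta η C f g lam k) j / ∑ k, mnorm1 (zeta η C f g lam k) := by
  funext j
  simp only [colSum, Finset.sum_apply, piMat, Finset.sum_div]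

lemma colSum_sum_piMat_pos (hn : 0 < n) (hN : 0 < N) (f g : Fin n → ℝ) (lam : Fin N → ℝ)
    (j : Fin n) : 0 < colSum (∑ k, piMat η C f g lam k) j := by
  rw [colSum_sum_piMat]
  exact div_pos (colSum_sum_zeta_pos hN f g lam j) (sum_mnorm1_zeta_pos hn hN f g lam)

lemma sum_colSum_sum_piMat (hn : 0 < n) (hN : 0 < N) (f g : Fin n → ℝ) (lam : Fin N → ℝ) :
    ∑ j, colSum (∑ k, piMat η C f g lam k) j = 1 := by
  rw [colSum_sum_piMat, ← Finset.sum_div, ← sum_mnorm1_zeta_eq_sum_colSum,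
    div_self (sum_mnorm1_zeta_pos hn hN f g lam).ne']

lemma sum_piMat (hn : 0 < n) (hN : 0 < N) (f g : Fin n → ℝ) (lam : Fin N → ℝ) :
    ∑ k, ∑ i, ∑ j, piMat η C f g lam k i j = 1 := by
  simp only [piMat, ← Finset.sum_div, ← mnorm1_zeta]
  exact div_self (sum_mnorm1_zeta_pos hn hN f g lam).ne'

lemma colSum_sum_zeta_add_right (hη : η ≠ 0) (f g w : Fin n → ℝ) (lam : Fin N → ℝ) (j : Fin n) :
    colSum (∑ k, zeta η C f (fun j => g j + η * w j) lam k) j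
      = exp (w j) * colSum (∑ k, zeta η C f g lam k) j := by
  simp only [colSum, Finset.sum_apply, Finset.mul_sum, zeta, ← exp_add]
  refine Finset.sum_congr rfl fun i _ => Finset.sum_congr rfl fun k _ => ?_
  congr 1
  field_simp
  ring

theorem Fdual_colUpdate_sub_eq_klVec (hn : 0 < n) (hN : 0 < N) (hη : η ≠ 0) (a : Fin n → ℝ)
    {b : Fin n → ℝ} (hb : ∀ j, 0 < b j) (hb1 : ∑ j, b j = 1) (f g : Fin n → ℝ)
    (lam : Fin N → ℝ) :
    Fdual η C a b f (fun j => g j + η * log (b j / colSum (∑ k, zeta η C f g lam k) j)) lam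
        - Fdual η C a b f g lam
      = η * klVec b (colSum (∑ k, piMat η C f g lam k)) := by
  set c := colSum (∑ k, zeta η C f g lam k)
  have hc : ∀ j, 0 < c j := colSum_sum_zeta_pos hN f g lam
  have hmass : ∑ k, mnorm1 (zeta η C f (fun j => g j + η * log (b j / c j)) lam k) = 1 := by
    simp only [sum_mnorm1_zeta_eq_sum_colSum, colSum_sum_zeta_add_right hη,
      exp_log (div_pos (hb _) (hc _))]
    exact (Finset.sum_congr rfl fun j _ => div_mul_cancel₀ _ (hc j).ne').trans hb1
  rw [colSum_sum_piMat, klVec_div_const hb hb1 hc (sum_mnorm1_zeta_pos hn hN f g lam)]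
  simp only [Fdual, hmass, log_one, klVec, add_mul, Finset.sum_add_distrib, mul_add,
    Finset.mul_sum]
  ring_nf

lemma zeta_transposeCosts (f g : Fin n → ℝ) (lam : Fin N → ℝ) (k : Fin N) (i j : Fin n) :
    zeta η (transposeCosts C) g f lam k j i = zeta η C f g lam k i j := by
  simp only [zeta, transposeCosts, add_comm (g j)]

lemma sum_mnorm1_zeta_transposeCosts (f g : Fin n → ℝ) (lam : Fin N → ℝ) :
    ∑ k, mnorm1 (zeta η (transposeCosts C) g f lam k) = ∑ k, mnorm1 (zeta η C f g lam k) := by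
  simp only [mnorm1_zeta]
  exact Finset.sum_congr rfl fun k _ => by rw [Finset.sum_comm]; simp only [zeta_transposeCosts]

lemma Fdual_transposeCosts (a b f g : Fin n → ℝ) (lam : Fin N → ℝ) :
    Fdual η (transposeCosts C) b a g f lam = Fdual η C a b f g lam := by
  simp only [Fdual, sum_mnorm1_zeta_transposeCosts]
  ring

lemma colSum_sum_zeta_transposeCosts (f g : Fin n → ℝ) (lam : Fin N → ℝ) :
    colSum (∑ k, zeta η (transposeCosts C) g f lam k) = rowSum (∑ k, zeta η C f g lam k) := by
  funext i
  simp only [colSum, rowSum, Finset.sum_apply, zeta_transposeCosts]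

theorem Fdual_le_rowUpdate (hn : 0 < n) (hN : 0 < N) (hη : 0 < η) {a : Fin n → ℝ}
    (ha : ∀ i, 0 < a i) (ha1 : ∑ i, a i = 1) (b f g : Fin n → ℝ) (lam : Fin N → ℝ) :
    Fdual η C a b f g lam
      ≤ Fdual η C a b (fun i => f i + η * log (a i / rowSum (∑ k, zeta η C f g lam k) i)) g
          lam := by
  have hgain := Fdual_colUpdate_sub_eq_klVec (C := transposeCosts C) hn hN hη.ne' b ha ha1 g f lam
  rw [Fdual_transposeCosts, Fdual_transposeCosts, colSum_sum_zeta_transposeCosts] at hgain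
  have hkl := klVec_nonneg ha (colSum_sum_piMat_pos (η := η) (C := transposeCosts C) hn hN g f lam)
    ha1 (sum_colSum_sum_piMat hn hN g f lam)
  linarith [mul_nonneg hη.le hkl]

lemma zeta_eq_mul_exp (f g : Fin n → ℝ) (l l' : Fin N → ℝ) (k : Fin N) (i j : Fin n) :
    zeta η C f g l' k i j
      = zeta η C f g l k i j * exp (-((l' k - l k) * C k i j) / η) := by
  rw [zeta, zeta, ← exp_add]
  ring_nf

lemma sum_mnorm1_zeta_eq_mul_sum_piMat_mul_exp (hn : 0 < n) (hN : 0 < N) (f g : Fin n → ℝ)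
    (l l' : Fin N → ℝ) :
    ∑ k, mnorm1 (zeta η C f g l' k)
      = (∑ k, mnorm1 (zeta η C f g l k)) * ∑ m : Fin N × Fin n × Fin n,
          piMat η C f g l m.1 m.2.1 m.2.2 * exp (-((l' m.1 - l m.1) * C m.1 m.2.1 m.2.2) / η) := by
  set S := ∑ k, mnorm1 (zeta η C f g l k)
  have hS : S ≠ 0 := (sum_mnorm1_zeta_pos hn hN f g l).ne'
  have hpi : ∀ k i j, piMat η C f g l k i j = zeta η C f g l k i j / S := fun _ _ _ => rfl
  simp only [mnorm1_zeta, Fintype.sum_prod_type, Finset.mul_sum, hpi, zeta_eq_mul_exp f g l l']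
  refine Finset.sum_congr rfl fun k _ => Finset.sum_congr rfl fun i _ =>
    Finset.sum_congr rfl fun j _ => ?_
  field_simp

lemma sum_piMat_mul_exponent (f g : Fin n → ℝ) (l l' : Fin N → ℝ) :
    ∑ m : Fin N × Fin n × Fin n,
        piMat η C f g l m.1 m.2.1 m.2.2 * (-((l' m.1 - l m.1) * C m.1 m.2.1 m.2.2) / η)
      = -(∑ k, gradLam η C f g l k * (l' k - l k)) / η := by
  simp only [gradLam, frob, Fintype.sum_prod_type, Finset.sum_mul, Finset.sum_div,
    ← Finset.sum_neg_distrib]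
  exact Finset.sum_congr rfl fun k _ => Finset.sum_congr rfl fun i _ =>
    Finset.sum_congr rfl fun j _ => by ring

lemma sq_sub_mul_le_sum_sq_mul_cinf_sq (C : Fin N → Mat n) (l l' : Fin N → ℝ) (k : Fin N)
    (i j : Fin n) :
    ((l' k - l k) * C k i j) ^ 2 ≤ (∑ k, (l' k - l k) ^ 2) * cinf C ^ 2 := by
  rw [mul_pow]
  refine mul_le_mul ?_ (sq_le_sq.2 ((abs_le_cinf C k i j).trans (le_abs_self _))) (sq_nonneg _)
    (Finset.sum_nonneg fun k _ => sq_nonneg _)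
  exact Finset.single_le_sum (f := fun k => (l' k - l k) ^ 2) (fun k _ => sq_nonneg _)
    (Finset.mem_univ k)

theorem Fdual_sub_ge_gradLam_sub_sq (hn : 0 < n) (hN : 0 < N) (hη : 0 < η) (a b f g : Fin n → ℝ)
    (l l' : Fin N → ℝ) :
    ∑ k, gradLam η C f g l k * (l' k - l k) - cinf C ^ 2 / (2 * η) * ∑ k, (l' k - l k) ^ 2
      ≤ Fdual η C a b f g l' - Fdual η C a b f g l := by
  set D := ∑ k, (l' k - l k) ^ 2
  set S := ∑ k, mnorm1 (zeta η C f g l k)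
  have hS : 0 < S := sum_mnorm1_zeta_pos hn hN f g l
  set p : Fin N × Fin n × Fin n → ℝ := fun m => piMat η C f g l m.1 m.2.1 m.2.2
  set X : Fin N × Fin n × Fin n → ℝ := fun m => -((l' m.1 - l m.1) * C m.1 m.2.1 m.2.2) / η
  set B := √(D * cinf C ^ 2 / η ^ 2)
  have hX : ∀ m, X m ∈ Set.Icc (-B) B := fun ⟨k, i, j⟩ => by
    refine abs_le.1 (abs_le_sqrt ?_)
    rw [div_pow, neg_sq]
    gcongr
    exact sq_sub_mul_le_sum_sq_mul_cinf_sq C l l' k i j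
  have hp1 : ∑ m, p m = 1 := by
    simpa only [p, Fintype.sum_prod_type] using sum_piMat hn hN f g l
  have hmass := sum_mnorm1_zeta_eq_mul_sum_piMat_mul_exp (η := η) (C := C) hn hN f g l l'
  have hpos : 0 < ∑ m, p m * exp (X m) :=
    pos_of_mul_pos_right (hmass ▸ sum_mnorm1_zeta_pos hn hN f g l') hS.le
  have hoeffding := log_sum_mul_exp_le_of_mem_Icc (p := p)
    (fun m => (div_pos (zeta_pos _ _ _ _ _ _) hS).le) hp1 hX
  rw [sum_piMat_mul_exponent, show (B - -B) ^ 2 / 8 = B ^ 2 / 2 by ring,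
    sq_sqrt (by positivity)] at hoeffding
  have hlog : η * log (∑ m, p m * exp (X m))
      ≤ -∑ k, gradLam η C f g l k * (l' k - l k) + cinf C ^ 2 / (2 * η) * D := by
    refine (mul_le_mul_of_nonneg_left hoeffding hη.le).trans_eq ?_
    field_simp
  simp only [Fdual]
  rw [hmass, log_mul hS.ne' hpos.ne']
  linarith

theorem Fdual_projGradStep_sub_ge (hn : 0 < n) (hN : 0 < N) (hη : 0 < η) (hc : 0 < cinf C)
    (a b f g : Fin n → ℝ) {l l' : Fin N → ℝ} (hl : l ∈ stdSimplex ℝ (Fin N))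
    (hstep : IsProjSimplex l' (fun k => l k + η / cinf C ^ 2 * gradLam η C f g l k)) :
    cinf C ^ 2 / (2 * η) * vnorm2 (fun k => l' k - l k) ^ 2
      ≤ Fdual η C a b f g l' - Fdual η C a b f g l := by
  have hproj := hstep.sum_sq_sub_le hl
  have hascent := Fdual_sub_ge_gradLam_sub_sq (C := C) hn hN hη a b f g l l'
  rw [vnorm2, sq_sqrt (Finset.sum_nonneg fun k _ => sq_nonneg _)]
  have hgrad : cinf C ^ 2 / η * ∑ k, (l' k - l k) ^ 2
      ≤ ∑ k, gradLam η C f g l k * (l' k - l k) := by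
    rw [div_mul_eq_mul_div, div_le_iff₀ hη]
    have := mul_le_mul_of_nonneg_left hproj (sq_nonneg (cinf C))
    rwa [← mul_assoc, mul_div_cancel₀ _ (by positivity), mul_comm η] at this
  have hhalf : cinf C ^ 2 / η = 2 * (cinf C ^ 2 / (2 * η)) := by
    field_simp
  rw [hhalf] at hgrad
  linarith

end Gibbs

theorem pam_sufficient_increase_general
    {n N : ℕ} (hn : 0 < n) (hN : 0 < N)
    (C : Fin N → Mat n) (a b : Fin n → ℝ)
    (ha : a ∈ stdSimplex ℝ (Fin n)) (hb : b ∈ stdSimplex ℝ (Fin n))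
    (ha' : ∀ i, 0 < a i) (hb' : ∀ j, 0 < b j)
    (η : ℝ) (hη : 0 < η) (hc : 0 < cinf C)
    (τ : ℝ) (hτ : τ = η / cinf C ^ 2)
    (f g : ℕ → Fin n → ℝ) (lam : ℕ → Fin N → ℝ)
    (hlam0 : lam 0 = fun _ => (N : ℝ)⁻¹)
    (hfstep : ∀ t, f (t + 1) = fun i =>
      f t i + η * Real.log (a i / rowSum (∑ k, zeta η C (f t) (g t) (lam t) k) i))
    (hgstep : ∀ t, g (t + 1) = fun j =>
      g t j + η * Real.log (b j / colSum (∑ k, zeta η C (f (t + 1)) (g t) (lam t) k) j))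
    (hlamstep : ∀ t, IsProjSimplex (lam (t + 1))
      (fun k => lam t k + τ * gradLam η C (f (t + 1)) (g (t + 1)) (lam t) k))
    (ct : ℕ → Fin n → ℝ)
    (hct : ∀ t, ct t = colSum (∑ k, piMat η C (f (t + 1)) (g t) (lam t) k)) :
    ∀ t : ℕ,
      (Fdual η C a b (f t) (g t) (lam t) ≤ Fdual η C a b (f (t + 1)) (g t) (lam t)) ∧
      (Fdual η C a b (f (t + 1)) (g (t + 1)) (lam t)
          - Fdual η C a b (f (t + 1)) (g t) (lam t) = η * klVec b (ct t) ∧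
        η / 2 * vnorm1 (fun j => ct t j - b j) ^ 2 ≤ η * klVec b (ct t)) ∧
      (cinf C ^ 2 / (2 * η) * vnorm2 (fun k => lam (t + 1) k - lam t k) ^ 2
        ≤ Fdual η C a b (f (t + 1)) (g (t + 1)) (lam (t + 1))
          - Fdual η C a b (f (t + 1)) (g (t + 1)) (lam t)) := by
  subst hτ
  have hsimplex : ∀ t, lam t ∈ stdSimplex ℝ (Fin N)
    | 0 => hlam0 ▸ ⟨fun _ => by positivity, by simp [Nat.cast_ne_zero.2 hN.ne']⟩
    | t + 1 => (hlamstep t).1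
  intro t
  refine ⟨?_, ⟨?_, ?_⟩, ?_⟩
  · rw [hfstep t]
    exact Fdual_le_rowUpdate hn hN hη ha' ha.2 b _ _ _
  · rw [hgstep t, hct t]
    exact Fdual_colUpdate_sub_eq_klVec hn hN hη.ne' a hb' hb.2 _ _ _
  · have hpinsker := sq_vnorm1_sub_le_two_mul_klVec hb' (colSum_sum_piMat_pos hn hN _ _ _) hb.2
      (sum_colSum_sum_piMat (η := η) (C := C) hn hN (f (t + 1)) (g t) (lam t))
    rw [hct t]
    linarith [mul_le_mul_of_nonneg_left hpinsker hη.le]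
  · exact Fdual_projGradStep_sub_ge hn hN hη hc a b _ _ (hsimplex t) (hlamstep t)

/-- monotone increase of F along the PAM iterates. -/
theorem pam_sufficient_increase
    {n N : ℕ} (hn : 0 < n) (hN : 0 < N)
    (C : Fin N → Mat n) (a b : Fin n → ℝ)
    (ha : a ∈ stdSimplex ℝ (Fin n)) (hb : b ∈ stdSimplex ℝ (Fin n))
    (ha' : ∀ i, 0 < a i) (hb' : ∀ j, 0 < b j)
    (η : ℝ) (hη : 0 < η) (hc : 0 < cinf C)
    (τ : ℝ) (hτ : τ = η / cinf C ^ 2)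
    (f g : ℕ → Fin n → ℝ) (lam : ℕ → Fin N → ℝ)
    (hf0 : f 0 = fun _ => 1) (hg0 : g 0 = fun _ => 1)
    (hlam0 : lam 0 = fun _ => (N : ℝ)⁻¹)
    (hfstep : ∀ t, f (t + 1) = fun i =>
      f t i + η * Real.log (a i / rowSum (∑ k, zeta η C (f t) (g t) (lam t) k) i))
    (hgstep : ∀ t, g (t + 1) = fun j =>
      g t j + η * Real.log (b j / colSum (∑ k, zeta η C (f (t + 1)) (g t) (lam t) k) j))
    (hlamstep : ∀ t, IsProjSimplex (lam (t + 1))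
      (fun k => lam t k + τ * gradLam η C (f (t + 1)) (g (t + 1)) (lam t) k))
    (ct : ℕ → Fin n → ℝ)
    (hct : ∀ t, ct t = colSum (∑ k, piMat η C (f (t + 1)) (g t) (lam t) k)) :
    ∀ t : ℕ,
      (Fdual η C a b (f t) (g t) (lam t) ≤ Fdual η C a b (f (t + 1)) (g t) (lam t)) ∧
      (Fdual η C a b (f (t + 1)) (g (t + 1)) (lam t)
          - Fdual η C a b (f (t + 1)) (g t) (lam t) = η * klVec b (ct t) ∧
        η / 2 * vnorm1 (fun j => ct t j - b j) ^ 2 ≤ η * klVec b (ct t)) ∧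
      (cinf C ^ 2 / (2 * η) * vnorm2 (fun k => lam (t + 1) k - lam t k) ^ 2
        ≤ Fdual η C a b (f (t + 1)) (g (t + 1)) (lam (t + 1))
          - Fdual η C a b (f (t + 1)) (g (t + 1)) (lam t)) :=
  pam_sufficient_increase_general hn hN C a b ha hb ha' hb' η hη hc τ hτ f g lam hlam0 hfstep hgstep
    hlamstep ct hct

end EOT

end
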